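/- In the dimension cover 𝔇(2n,k) with k ≥ 2n+1, for each j ∈ {1,...,k} and each cube C of 𝔠^j(2n,k), the Euclidean distance from C to 𝔠^j(2n,k) \ C equals δ := min{(k-2n)/(2n), 1/(2n-1)}. In particular cubes of the same colour are at distance at least δ > 0 from each other. -/

import Mathlib

noncomputable section

open Matrix

/-- Euclidean `ℝ^{2n}`. -/
abbrev E2n (n : ℕ) : Type := EuclideanSpace ℝ (Fin (2 * n))

/-- The matrix `M(2n,k)`: upper bidiagonal with diagonal `(k,1,…,1)` and
superdiagonal `(k/(2n), 2n/(2n-1), (2n-1)/(2n-2), …, 3/2)`. -/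
def Mmat (n k : ℕ) : Matrix (Fin (2 * n)) (Fin (2 * n)) ℝ := fun i j =>
  if (j : ℕ) = (i : ℕ) then (if (i : ℕ) = 0 then (k : ℝ) else 1)
  else if (j : ℕ) = (i : ℕ) + 1 then
    (if (i : ℕ) = 0 then (k : ℝ) / (2 * n) else ((2 * n : ℝ) - (i : ℕ) + 1) / ((2 * n : ℝ) - (i : ℕ)))
  else 0

/-- The closed unit cube `[0,1]^{2n}` in Euclidean space. -/
def unitCube (n : ℕ) : Set (E2n n) := {x | ∀ i, x i ∈ Set.Icc (0 : ℝ) 1}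

/-- The base point of the cube of colour `j` (zero-based) at lattice site `v`:
`(j)e₁ + M(2n,k)v`. -/
def cubeBase (n k : ℕ) (j : Fin k) (v : Fin (2 * n) → ℤ) : E2n n :=
  (WithLp.equiv 2 _).symm fun i =>
    (if (i : ℕ) = 0 then ((j : ℕ) : ℝ) else 0) + (Mmat n k).mulVec (fun i' => (v i' : ℝ)) i

/-- The cube of colour `j` at lattice site `v`. -/
def cubeAt (n k : ℕ) (j : Fin k) (v : Fin (2 * n) → ℤ) : Set (E2n n) :=
  (fun x => cubeBase n k j v + x) '' unitCube n

/-- The `j`-th colour `𝔠^j(2n,k)`, the union of its cubes. -/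
def frakC (n k : ℕ) (j : Fin k) : Set (E2n n) :=
  ⋃ v : Fin (2 * n) → ℤ, cubeAt n k j v

/-- Euclidean distance between two subsets. -/
def setDist {α : Type*} [MetricSpace α] (A B : Set α) : ℝ :=
  sInf {d | ∃ a ∈ A, ∃ b ∈ B, d = dist a b}

/-! The cube of colour `j` at site `v'` lies at distance `≥ δ` from the one at `v ≠ v'`: the
cubes have side `1`, and for the integer vector `u = v' - v ≠ 0` some coordinate of `M u` has
absolute value `≥ 1 + δ`. Indeed, suppose all `|(M u)ᵢ| < 1 + δ`. Row `i ≥ 1` of `M u` reads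
`uᵢ + (1 + 1/m) uᵢ₊₁` with `m = 2n - i` and `δ ≤ 1/m`, so going down from the last row gives
`|uᵢ| ≤ 2n - i`; row `0` is `(k/2n)(2n u₀ + u₁)` with `1 + δ ≤ k/2n`, which forces
`2n u₀ + u₁ = 0`, hence `u₀ = u₁ = 0`; going up again, every later `uᵢ` vanishes.
The value `δ` is attained at explicit pairs of points: for `u = e₁` the gap `k/2n - 1` opens in
coordinate `0`, for `u = e₂` the gap `1/(2n-1)` in coordinate `1`, and for `n = 1` the vector
`u = (1, -2)` gives `M u = (0, -2)`. -/

lemma Int.eq_zero_of_abs_mul_lt {c : ℝ} {z : ℤ} (h : |c * z| < c) : z = 0 := by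
  have hc : 0 < c := (abs_nonneg _).trans_lt h
  rw [abs_mul, abs_of_pos hc] at h
  exact_mod_cast Int.abs_lt_one_iff.mp (by exact_mod_cast (mul_lt_iff_lt_one_right hc).mp h)

section Rows

variable {N : ℕ} {k δ : ℝ} {U : ℕ → ℤ}

lemma abs_le_sub_of_abs_row_lt (hδ : δ ≤ 1 / (N - 1)) (hUN : U N = 0)
    (hrow : ∀ i, 1 ≤ i → i < N → |(U i : ℝ) + (N - i + 1) / (N - i) * U (i + 1)| < 1 + δ)
    {i : ℕ} (hi : 1 ≤ i) (hiN : i ≤ N) : |U i| ≤ (N : ℤ) - i := by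
  induction hiN using Nat.decreasingInduction with
  | self => simp [hUN]
  | of_succ i hiN ih =>
    have hiN' : (i : ℝ) + 1 ≤ N := by exact_mod_cast hiN
    have hi' : (1 : ℝ) ≤ i := by exact_mod_cast hi
    set m : ℝ := N - i
    have hm : 1 ≤ m := by simp only [m]; linarith
    have hδm : δ ≤ 1 / m := hδ.trans (by gcongr; simp only [m]; linarith)
    have hrowi : |(U i : ℝ) + (m + 1) / m * U (i + 1)| < 1 + δ := hrow i hi hiN
    have hnext : |(U (i + 1) : ℝ)| ≤ m - 1 := by
      have := ih (by omega); rify at this; simp only [m]; linarith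
    have hlt : |(U i : ℝ)| < m + 1 := calc
      |(U i : ℝ)| ≤ |(U i : ℝ) + (m + 1) / m * U (i + 1)| + |(m + 1) / m * U (i + 1)| := by
        simpa using abs_sub ((U i : ℝ) + (m + 1) / m * U (i + 1)) ((m + 1) / m * U (i + 1))
      _ < 1 + 1 / m + (m + 1) / m * (m - 1) := by
        have hr : 0 < (m + 1) / m := by apply div_pos <;> linarith
        rw [abs_mul, abs_of_pos hr]
        exact add_lt_add_of_lt_of_le (by linarith) (by gcongr)
      _ = m + 1 := by field_simp; ring
    have : |U i| < (N : ℤ) - i + 1 := by rify; simpa [m] using hlt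
    omega

lemma eq_zero_of_abs_row_lt (hδ : δ ≤ 1 / (N - 1))
    (hrow : ∀ i, 1 ≤ i → i < N → |(U i : ℝ) + (N - i + 1) / (N - i) * U (i + 1)| < 1 + δ)
    (h1 : U 1 = 0) {i : ℕ} (hi : 1 ≤ i) (hiN : i ≤ N) : U i = 0 := by
  induction i, hi using Nat.le_induction with
  | base => exact h1
  | succ i hi ih =>
    have hiN' : (i : ℝ) + 1 ≤ N := by exact_mod_cast hiN
    have hi' : (1 : ℝ) ≤ i := by exact_mod_cast hi
    set m : ℝ := N - i
    have hm : 1 ≤ m := by simp only [m]; linarith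
    have hδm : δ ≤ 1 / m := hδ.trans (by gcongr; simp only [m]; linarith)
    have hrowi : |(U i : ℝ) + (m + 1) / m * U (i + 1)| < 1 + δ := hrow i hi hiN
    rw [ih (by omega), Int.cast_zero, zero_add] at hrowi
    refine Int.eq_zero_of_abs_mul_lt (hrowi.trans_le ?_)
    rw [add_div, div_self (by linarith)]
    linarith

lemma eq_zero_of_abs_rows_lt (hN : 0 < N) (hδk : δ ≤ (k - N) / N) (hδ : δ ≤ 1 / (N - 1))
    (hUN : U N = 0) (h0 : |k * U 0 + k / N * U 1| < 1 + δ)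
    (hrow : ∀ i, 1 ≤ i → i < N → |(U i : ℝ) + (N - i + 1) / (N - i) * U (i + 1)| < 1 + δ)
    {i : ℕ} (hiN : i ≤ N) : U i = 0 := by
  have hN' : (0 : ℝ) < N := by exact_mod_cast hN
  have hsum : N * U 0 + U 1 = 0 := by
    refine Int.eq_zero_of_abs_mul_lt (c := k / N) ?_
    calc |k / N * ((N * U 0 + U 1 : ℤ) : ℝ)| = |k * U 0 + k / N * U 1| := by
          push_cast; field_simp
      _ < 1 + δ := h0
      _ ≤ k / N := by rw [sub_div, div_self hN'.ne'] at hδk; linarith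
  have hU1 := abs_le_sub_of_abs_row_lt hδ hUN hrow le_rfl (by omega)
  have hU0 : U 0 = 0 := by
    by_contra hne
    have : (N : ℤ) ≤ N * |U 0| := le_mul_of_one_le_right (by positivity) (Int.one_le_abs hne)
    rw [eq_neg_of_add_eq_zero_right hsum, abs_neg, abs_mul, abs_of_nonneg (by positivity)] at hU1
    omega
  rcases Nat.eq_zero_or_pos i with rfl | hi
  · exact hU0
  · exact eq_zero_of_abs_row_lt hδ hrow (by simpa [hU0] using hsum) hi hiN

end Rows

lemma Mmat_mulVec_apply (n k : ℕ) {U : ℕ → ℝ} (hU : U (2 * n) = 0) (i : Fin (2 * n)) :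
    (Mmat n k *ᵥ fun j => U j) i =
      (if (i : ℕ) = 0 then (k : ℝ) else 1) * U i +
      (if (i : ℕ) = 0 then (k : ℝ) / (2 * n) else ((2 * n : ℝ) - i + 1) / ((2 * n : ℝ) - i)) *
        U (i + 1) := by
  simp only [mulVec, dotProduct, Mmat]
  rw [Fin.sum_univ_eq_sum_range
      (fun m => (if m = (i : ℕ) then _ else if m = i + 1 then _ else 0) * U m),
    Finset.sum_eq_add (i : ℕ) (i + 1) (by omega)]
  · simp
  · intro m _ hm
    simp [hm.1, hm.2]
  · simp
  · intro h
    simp [show (i : ℕ) + 1 = 2 * n by simp at h; omega, hU]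

theorem exists_le_abs_Mmat_mulVec {n k : ℕ} {δ : ℝ} (hn : 0 < n)
    (hδk : δ ≤ ((k : ℝ) - 2 * n) / (2 * n)) (hδn : δ ≤ 1 / (2 * (n : ℝ) - 1))
    {u : Fin (2 * n) → ℤ} (hu : u ≠ 0) : ∃ i, 1 + δ ≤ |(Mmat n k *ᵥ fun j => (u j : ℝ)) i| := by
  by_contra! h
  apply hu
  set U : ℕ → ℤ := Function.extend Fin.val u 0
  have hUu (j : Fin (2 * n)) : U j = u j := Fin.val_injective.extend_apply u 0 j
  have hUN : U (2 * n) = 0 := Function.extend_apply' _ _ _ fun ⟨j, hj⟩ => by omega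
  have hrow (i : Fin (2 * n)) := h i
  simp only [← hUu, Mmat_mulVec_apply n k (U := fun m => (U m : ℝ)) (by simp [hUN])] at hrow
  funext j
  rw [← hUu]
  refine eq_zero_of_abs_rows_lt (N := 2 * n) (k := k) (by omega) (by push_cast; exact hδk)
    (by push_cast; exact hδn) hUN ?_ ?_ j.is_lt.le
  · simpa using hrow ⟨0, by omega⟩
  · intro i hi hiN
    simpa [show i ≠ 0 by omega] using hrow ⟨i, hiN⟩

section Cubes

variable {n k : ℕ} {j : Fin k}

lemma cubeBase_sub_cubeBase_apply (v v' : Fin (2 * n) → ℤ) (i : Fin (2 * n)) :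
    (cubeBase n k j v' - cubeBase n k j v) i = (Mmat n k *ᵥ fun m => ((v' - v) m : ℝ)) i := by
  simp only [cubeBase, WithLp.equiv_symm_apply, PiLp.sub_apply, Pi.sub_apply,
    Int.cast_sub, ← Pi.sub_def, mulVec_sub]
  ring

lemma mem_cubeAt_iff {v : Fin (2 * n) → ℤ} {x : E2n n} :
    x ∈ cubeAt n k j v ↔ ∀ i, x i - cubeBase n k j v i ∈ Set.Icc (0 : ℝ) 1 := by
  constructor
  · rintro ⟨p, hp, rfl⟩ i
    simpa using hp i
  · exact fun h => ⟨x - cubeBase n k j v, fun i => by simpa using h i, by simp⟩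

theorem le_dist_of_mem_cubeAt {δ : ℝ} (hn : 0 < n) (hδk : δ ≤ ((k : ℝ) - 2 * n) / (2 * n))
    (hδn : δ ≤ 1 / (2 * (n : ℝ) - 1)) {v v' : Fin (2 * n) → ℤ} (hvv' : v ≠ v') {x y : E2n n}
    (hx : x ∈ cubeAt n k j v) (hy : y ∈ cubeAt n k j v') : δ ≤ dist x y := by
  obtain ⟨i, hi⟩ := exists_le_abs_Mmat_mulVec hn hδk hδn (sub_ne_zero.2 hvv'.symm)
  have hxi := mem_cubeAt_iff.1 hx i
  have hyi := mem_cubeAt_iff.1 hy i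
  rw [← cubeBase_sub_cubeBase_apply (j := j), PiLp.sub_apply] at hi
  calc δ ≤ |x i - y i| := by
        rw [le_abs] at hi ⊢
        obtain ⟨hx0, hx1⟩ := hxi
        obtain ⟨hy0, hy1⟩ := hyi
        rcases hi with h | h
        · right; linarith
        · left; linarith
    _ ≤ dist x y := by simpa [Real.dist_eq] using PiLp.dist_apply_le x y i

lemma exists_mem_cubeAt_dist_eq (v u : Fin (2 * n) → ℤ) {p q : E2n n}
    (hp : p ∈ unitCube n) (hq : q ∈ unitCube n) (i₀ : Fin (2 * n)) (a : ℝ)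
    (h : ∀ i, (Mmat n k *ᵥ fun m => (u m : ℝ)) i + q i - p i = if i = i₀ then a else 0) :
    ∃ x ∈ cubeAt n k j v, ∃ y ∈ cubeAt n k j (v + u), dist x y = |a| := by
  refine ⟨_, ⟨p, hp, rfl⟩, _, ⟨q, hq, rfl⟩, ?_⟩
  have hyx : cubeBase n k j (v + u) + q - (cubeBase n k j v + p) = PiLp.single 2 i₀ a := by
    ext i
    rw [PiLp.single_apply, ← h, ← add_sub_cancel_left v u, ← cubeBase_sub_cubeBase_apply]
    simp only [PiLp.sub_apply, PiLp.add_apply, add_sub_cancel_left]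
    ring
  rw [dist_comm, dist_eq_norm, hyx, PiLp.norm_single, Real.norm_eq_abs]

lemma exists_mem_cubeAt_dist_eq_sub_div (hn : 0 < n) (hk : 2 * n ≤ k) (v : Fin (2 * n) → ℤ) :
    ∃ u ≠ 0, ∃ x ∈ cubeAt n k j v, ∃ y ∈ cubeAt n k j (v + u),
      dist x y = ((k : ℝ) - 2 * n) / (2 * n) := by
  set U : ℕ → ℤ := fun m => if m = 1 then 1 else 0
  refine ⟨fun m => U m, fun h => by simpa [U] using congrFun h ⟨1, by omega⟩, ?_⟩
  obtain ⟨x, hx, y, hy, hxy⟩ := exists_mem_cubeAt_dist_eq (j := j) v (fun m => U m)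
    (p := WithLp.toLp 2 fun m => if (m : ℕ) ≤ 1 then 1 else 0) (q := 0)
    (fun i => by dsimp only; split_ifs <;> simp) (fun i => by simp)
    ⟨0, by omega⟩ ((k : ℝ) / (2 * n) - 1) (by
      rintro ⟨i, hi⟩
      rw [Mmat_mulVec_apply n k (U := fun m => (U m : ℝ)) (by simp [U])]
      rcases i with _ | _ | i <;> simp [U, Fin.ext_iff])
  refine ⟨x, hx, y, hy, hxy.trans ?_⟩
  have hn' : (0 : ℝ) < 2 * n := by positivity
  have hk' : (2 * n : ℝ) ≤ k := by exact_mod_cast hk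
  rw [abs_of_nonneg (by rw [sub_nonneg, le_div_iff₀ hn']; linarith)]
  field_simp

lemma exists_mem_cubeAt_dist_eq_one_div (hn : 1 < n) (v : Fin (2 * n) → ℤ) :
    ∃ u ≠ 0, ∃ x ∈ cubeAt n k j v, ∃ y ∈ cubeAt n k j (v + u),
      dist x y = 1 / (2 * (n : ℝ) - 1) := by
  set U : ℕ → ℤ := fun m => if m = 2 then 1 else 0
  refine ⟨fun m => U m, fun h => by simpa [U] using congrFun h ⟨2, by omega⟩, ?_⟩
  have hn' : (2 : ℝ) ≤ n := by exact_mod_cast hn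
  have h2n : (2 * n : ℝ) - 1 ≠ 0 := by linarith
  obtain ⟨x, hx, y, hy, hxy⟩ := exists_mem_cubeAt_dist_eq (j := j) v (fun m => U m)
    (p := WithLp.toLp 2 fun m => if 1 ≤ (m : ℕ) ∧ (m : ℕ) ≤ 2 then 1 else 0) (q := 0)
    (fun i => by dsimp only; split_ifs <;> simp) (fun i => by simp)
    ⟨1, by omega⟩ (1 / (2 * n - 1)) (by
      rintro ⟨i, hi⟩
      rw [Mmat_mulVec_apply n k (U := fun m => (U m : ℝ)) (by simp [U]; omega)]
      rcases i with _ | _ | _ | i <;> simp [U, Fin.ext_iff]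
      field_simp; ring)
  exact ⟨x, hx, y, hy, hxy.trans (abs_of_pos (by rw [one_div_pos]; linarith))⟩

lemma exists_mem_cubeAt_dist_eq_one (v : Fin (2 * 1) → ℤ) :
    ∃ u ≠ 0, ∃ x ∈ cubeAt 1 k j v, ∃ y ∈ cubeAt 1 k j (v + u), dist x y = 1 := by
  set U : ℕ → ℤ := fun m => if m = 0 then 1 else if m = 1 then -2 else 0
  refine ⟨fun m => U m, fun h => by simpa [U] using congrFun h 0, ?_⟩
  obtain ⟨x, hx, y, hy, hxy⟩ := exists_mem_cubeAt_dist_eq (j := j) v (fun m => U m)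
    (p := 0) (q := WithLp.toLp 2 fun m => if (m : ℕ) = 1 then 1 else 0)
    (fun i => by simp) (fun i => by dsimp only; split_ifs <;> simp)
    1 (-1) (by
      rintro ⟨i, hi⟩
      rw [Mmat_mulVec_apply 1 k (U := fun m => (U m : ℝ)) (by simp [U])]
      rcases i with _ | _ | i <;> norm_num [U, Fin.ext_iff])
  exact ⟨x, hx, y, hy, hxy.trans (by norm_num)⟩

def cubeGap (n k : ℕ) : ℝ := min (((k : ℝ) - 2 * n) / (2 * n)) (1 / (2 * (n : ℝ) - 1))

theorem exists_mem_cubeAt_dist_eq_cubeGap (hn : 0 < n) (hk : 2 * n ≤ k) (v : Fin (2 * n) → ℤ) :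
    ∃ u ≠ 0, ∃ x ∈ cubeAt n k j v, ∃ y ∈ cubeAt n k j (v + u), dist x y = cubeGap n k := by
  rcases le_total (((k : ℝ) - 2 * n) / (2 * n)) (1 / (2 * (n : ℝ) - 1)) with h | h
  · rw [cubeGap, min_eq_left h]
    exact exists_mem_cubeAt_dist_eq_sub_div hn hk v
  · rw [cubeGap, min_eq_right h]
    obtain hn | rfl : 1 < n ∨ n = 1 := by omega
    · exact exists_mem_cubeAt_dist_eq_one_div hn v
    · norm_num
      exact exists_mem_cubeAt_dist_eq_one v

end Cubes

/-- **Separation of cubes of the same colour.** In the dimension cover `𝔇(2n,k)` with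
`k ≥ 2n+1`, for each colour `j` and each cube `C` of `𝔠^j(2n,k)`, the Euclidean distance
from `C` to `𝔠^j(2n,k) \ C` equals `δ = min{(k-2n)/(2n), 1/(2n-1)}`; in particular
distinct cubes of the same colour are at distance at least `δ > 0`. -/
theorem same_colour_cubes_distance (n k : ℕ) (hn : 0 < n) (hk : 2 * n + 1 ≤ k) :
    0 < min (((k : ℝ) - 2 * n) / (2 * n)) (1 / (2 * (n : ℝ) - 1)) ∧
    ∀ (j : Fin k) (v : Fin (2 * n) → ℤ),
      setDist (cubeAt n k j v) (frakC n k j \ cubeAt n k j v) =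
        min (((k : ℝ) - 2 * n) / (2 * n)) (1 / (2 * (n : ℝ) - 1)) := by
  have hn' : (1 : ℝ) ≤ n := by exact_mod_cast hn
  have hk' : 2 * (n : ℝ) + 1 ≤ k := by exact_mod_cast hk
  have hgap : 0 < cubeGap n k := lt_min (div_pos (by linarith) (by linarith)) (by simp; linarith)
  have hsep {j : Fin k} {v v'} (hvv' : v ≠ v') {x y} (hx : x ∈ cubeAt n k j v)
      (hy : y ∈ cubeAt n k j v') : cubeGap n k ≤ dist x y :=
    le_dist_of_mem_cubeAt hn (min_le_left _ _) (min_le_right _ _) hvv' hx hy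
  refine ⟨hgap, fun j v => IsLeast.csInf_eq ⟨?_, ?_⟩⟩
  · obtain ⟨u, hu, x, hx, y, hy, hxy⟩ := exists_mem_cubeAt_dist_eq_cubeGap (j := j) hn (by omega) v
    refine ⟨x, hx, y, ⟨Set.mem_iUnion.2 ⟨_, hy⟩, fun hyv => ?_⟩, hxy.symm⟩
    exact hgap.not_ge (by simpa using hsep (by simpa using hu) hyv hy)
  · rintro _ ⟨x, hx, y, ⟨hy, hyv⟩, rfl⟩
    obtain ⟨v', hy'⟩ := Set.mem_iUnion.1 hy
    exact hsep (by rintro rfl; exact hyv hy') hx hy'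

end
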